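/- arXiv:1907.00284 — 2 statements merged into one kernel-verified Lean document; each statement's English description precedes it below -/
import Mathlib

section
/- Let δ be an inaccessible cardinal and suppose that for every C ⊆ V_δ there is κ < δ that is β-C-strong for all β < δ (i.e., δ is Woodin). Then for every sequence of graphs ⟨G_α : α < δ⟩ with each G_α of cardinality less than δ, if for all α ≤ α' < δ there is a graph homomorphism G_{α'} → G_α, then there exists κ < δ and a graph homomorphism G_κ → G_{κ+1}. -/
/-!
Replace each `G_α` by a homomorphically equivalent copy in `V_δ` and let `C ⊆ V_δ` be the set
of codes `⟨α, ⟨vertices, edges⟩⟩` of the copies. Take `κ` Woodin for `C`, `β < δ` with the codes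
of `κ` and `κ + 1` in `V_β`, and `j : V → M` witnessing that `κ` is `β`-`C`-strong. In `V` the set
`c = C ∩ V_β` has the first-order property that each graph coded in `c` maps homomorphically to
every graph coded in `c` with a smaller or equal index, so by elementarity `j c` has it in `M`. Now
`j c` contains `j` of the code of `G_κ`, with index `j κ ≥ κ + 1`, and, since `j c ∩ V_β = c`, the
code of `G_{κ+1}`. So `M` has a homomorphism `j(G_κ) → G_{κ+1}`, which is one in `V` as the
notion is `Δ₀`; composing with `j ↾ G_κ : G_κ → j(G_κ)` finishes the proof.
-/

open FirstOrder

namespace WVP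

/-- The type of relation symbols of the language of set theory: a single binary
relation (membership). -/
inductive memRel : ℕ → Type
  | mem : memRel 2

/-- The first-order language with a single binary relation symbol `∈`. -/
def ZFLang : FirstOrder.Language := ⟨fun _ => Empty, memRel⟩

instance : ZFLang.Structure ZFSet where
  funMap := fun f _ => f.elim
  RelMap := fun r x => match r with | .mem => x 0 ∈ x 1

instance (M : Set ZFSet) : ZFLang.Structure M where
  funMap := fun f _ => f.elim
  RelMap := fun r x => match r with | .mem => (x 0 : ZFSet) ∈ (x 1 : ZFSet)

/-- `M` is a transitive class of ZF-sets. -/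
def ClassTransitive (M : Set ZFSet) : Prop := ∀ x ∈ M, ∀ y ∈ x, y ∈ M

/-- `j : V → M` is an elementary embedding of the set-theoretic universe into the
class `M` (elementary with respect to the language of set theory). -/
def Elementary (M : Set ZFSet) (j : ZFSet → ZFSet) : Prop :=
  ∃ hj : ∀ x, j x ∈ M, ∀ (n : ℕ) (φ : ZFLang.Formula (Fin n)) (v : Fin n → ZFSet),
    φ.Realize v ↔ φ.Realize fun i => (⟨j (v i), hj (v i)⟩ : M)

attribute [local instance] Classical.propDecidable

noncomputable instance (n : ℕ) (F : (Fin n → ZFSet) → ZFSet) : ZFSet.Definable n F :=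
  Classical.allZFSetDefinable F

/-- `x` is a (von Neumann) ordinal: a transitive set all of whose elements are
transitive. -/
def IsOrd (x : ZFSet) : Prop := x.IsTransitive ∧ ∀ y ∈ x, ZFSet.IsTransitive y

/-- Ordinal successor `κ + 1 = κ ∪ {κ}`. -/
def succZ (x : ZFSet) : ZFSet := insert x x

/-- The cumulative hierarchy: `Vlev β = ⋃_{α ∈ β} 𝒫(Vlev α)`, so that for an
ordinal `β`, `Vlev β` is the set `V_β` of all sets of rank less than `β`. -/
noncomputable def Vlev : ZFSet → ZFSet :=
  ZFSet.mem_wf.fix fun β IH =>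
    ZFSet.sUnion (ZFSet.image
      (fun α => if h : α ∈ β then ZFSet.powerset (IH α h) else ∅) β)

/-- `κ` is `β`-`C`-strong: there are a transitive class `M` and an elementary
embedding `j : V → M` with critical point `κ` such that `V_β ⊆ M` and
`j(C ∩ V_β) ∩ V_β = C ∩ V_β`. -/
def BetaCStrong (κ β C : ZFSet) : Prop :=
  ∃ (M : Set ZFSet) (j : ZFSet → ZFSet), ClassTransitive M ∧ Elementary M j ∧
    IsOrd κ ∧ j κ ≠ κ ∧ (∀ α, IsOrd α → α ∈ κ → j α = α) ∧
    (∀ x, x ∈ Vlev β → x ∈ M) ∧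
    j (C ∩ Vlev β) ∩ Vlev β = C ∩ Vlev β

/-- There is a graph homomorphism from the graph `(g, e)` to the graph `(g', e')`. -/
def GraphHom (g e g' e' : ZFSet) : Prop :=
  ∃ f : ZFSet → ZFSet, (∀ x ∈ g, f x ∈ g') ∧
    ∀ x y : ZFSet, ZFSet.pair x y ∈ e → ZFSet.pair (f x) (f y) ∈ e'

/-- `(g, e)` is a graph: `e` is a set of (Kuratowski-coded) pairs from `g`. -/
def IsGraph (g e : ZFSet) : Prop := ∀ z ∈ e, ∃ x ∈ g, ∃ y ∈ g, z = ZFSet.pair x y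

/-- `g` has cardinality less than `δ`: `g` injects into some element of `δ`. -/
def SmallerThan (g δ : ZFSet) : Prop :=
  ∃ γ ∈ δ, ∃ f : ZFSet → ZFSet,
    (∀ x ∈ g, f x ∈ γ) ∧ ∀ x ∈ g, ∀ y ∈ g, f x = f y → x = y

/-- `δ` is a regular ordinal: no function from an element of `δ` has range
unbounded in `δ`. -/
def Regular (δ : ZFSet) : Prop :=
  ∀ γ ∈ δ, ∀ f : ZFSet → ZFSet, (∀ α ∈ γ, f α ∈ δ) → ∃ β ∈ δ, ∀ α ∈ γ, f α ∈ β

/-- `δ` is a strong limit: for every `γ ∈ δ`, the power set of `γ` injects into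
some element of `δ`. -/
def StrongLimit (δ : ZFSet) : Prop :=
  ∀ γ ∈ δ, ∃ β ∈ δ, ∃ f : ZFSet → ZFSet,
    (∀ x ∈ ZFSet.powerset γ, f x ∈ β) ∧
    ∀ x ∈ ZFSet.powerset γ, ∀ y ∈ ZFSet.powerset γ, f x = f y → x = y

/-- `δ` is an inaccessible cardinal: an uncountable regular strong limit ordinal. -/
def Inacc (δ : ZFSet) : Prop :=
  IsOrd δ ∧ ZFSet.omega ∈ δ ∧ Regular δ ∧ StrongLimit δ

theorem isOrd_iff_isOrdinal {x : ZFSet} : IsOrd x ↔ x.IsOrdinal :=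
  ZFSet.isOrdinal_iff_forall_mem_isTransitive.symm

theorem mem_succZ {x a : ZFSet} : x ∈ succZ a ↔ x = a ∨ x ∈ a := ZFSet.mem_insert_iff

theorem self_mem_succZ (a : ZFSet) : a ∈ succZ a := mem_succZ.2 (Or.inl rfl)

theorem succZ_subset_of_mem {a b : ZFSet} (hb : b.IsOrdinal) (h : a ∈ b) : succZ a ⊆ b := by
  intro x hx
  rcases mem_succZ.1 hx with rfl | hx
  exacts [h, hb.mem_trans hx h]

theorem succZ_mem_or_eq_of_mem {a b : ZFSet} (hb : b.IsOrdinal) (h : a ∈ b) :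
    succZ a ∈ b ∨ succZ a = b :=
  ((ZFSet.isOrdinal_succ (hb.mem h)).subset_iff_eq_or_mem hb |>.1
    (succZ_subset_of_mem hb h)).symm

/-- A limit ordinal, or `0`. -/
def IsLimitOrd (δ : ZFSet) : Prop := δ.IsOrdinal ∧ ∀ a ∈ δ, succZ a ∈ δ

theorem Inacc.isLimitOrd {δ : ZFSet} (hδ : Inacc δ) : IsLimitOrd δ := by
  obtain ⟨hord, hω, hreg, -⟩ := hδ
  have hord := isOrd_iff_isOrdinal.1 hord
  refine ⟨hord, fun a ha => ?_⟩
  refine (succZ_mem_or_eq_of_mem hord ha).resolve_right fun hδa => ?_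
  -- `δ = a + 1` would make the constant function `a` on `ω` unbounded in `δ`
  obtain ⟨β, hβδ, hβ⟩ := hreg _ hω (fun _ => a) fun _ _ => ha
  have haβ : a ∈ β := hβ ∅ ZFSet.omega_zero
  rw [← hδa] at hβδ
  rcases mem_succZ.1 hβδ with rfl | hβa
  · exact ZFSet.mem_irrefl _ haβ
  · exact ZFSet.mem_irrefl _ ((hord.mem ha).mem_trans haβ hβa)

theorem mem_Vlev {x β : ZFSet} : x ∈ Vlev β ↔ ∃ α ∈ β, x ⊆ Vlev α := by
  rw [Vlev, WellFounded.fix_eq]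
  simp only [ZFSet.mem_sUnion, ZFSet.mem_image]
  constructor
  · rintro ⟨_, ⟨α, hα, rfl⟩, hx⟩
    rw [dif_pos hα, ZFSet.mem_powerset] at hx
    exact ⟨α, hα, hx⟩
  · rintro ⟨α, hα, hx⟩
    exact ⟨_, ⟨α, hα, rfl⟩, by rwa [dif_pos hα, ZFSet.mem_powerset]⟩

theorem Vlev_mono {α β : ZFSet} (h : α ⊆ β) : Vlev α ⊆ Vlev β := fun _ hx =>
  let ⟨γ, hγ, hx⟩ := mem_Vlev.1 hx
  mem_Vlev.2 ⟨γ, h hγ, hx⟩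

theorem mem_Vlev_succZ {x α : ZFSet} (h : x ⊆ Vlev α) : x ∈ Vlev (succZ α) :=
  mem_Vlev.2 ⟨α, self_mem_succZ α, h⟩

theorem mem_Vlev_of_subset {x y β : ZFSet} (hy : y ∈ Vlev β) (h : x ⊆ y) : x ∈ Vlev β :=
  let ⟨α, hα, hy⟩ := mem_Vlev.1 hy
  mem_Vlev.2 ⟨α, hα, h.trans hy⟩

theorem subset_Vlev_self {α : ZFSet} (hα : α.IsOrdinal) : α ⊆ Vlev α := by
  induction α using ZFSet.inductionOn with
  | _ α IH => exact fun ξ hξ => mem_Vlev.2 ⟨ξ, hξ, IH ξ hξ (hα.mem hξ)⟩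

theorem mem_Vlev_of_mem {α β : ZFSet} (hβ : β.IsOrdinal) (h : α ∈ β) : α ∈ Vlev β :=
  mem_Vlev.2 ⟨α, h, subset_Vlev_self (hβ.mem h)⟩

namespace IsLimitOrd

variable {δ x y : ZFSet}

theorem exists_mem_Vlev (hδ : IsLimitOrd δ) (hx : x ∈ Vlev δ) (hy : y ∈ Vlev δ) :
    ∃ β ∈ δ, β.IsOrdinal ∧ x ∈ Vlev β ∧ y ∈ Vlev β := by
  obtain ⟨α₁, hα₁, hx⟩ := mem_Vlev.1 hx
  obtain ⟨α₂, hα₂, hy⟩ := mem_Vlev.1 hy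
  obtain ⟨γ, hγ, h₁, h₂⟩ : ∃ γ ∈ δ, α₁ ⊆ γ ∧ α₂ ⊆ γ := by
    rcases (hδ.1.mem hα₁).subset_total (hδ.1.mem hα₂) with h | h
    exacts [⟨α₂, hα₂, h, subset_rfl⟩, ⟨α₁, hα₁, subset_rfl, h⟩]
  exact ⟨succZ γ, hδ.2 γ hγ, ZFSet.isOrdinal_succ (hδ.1.mem hγ),
    mem_Vlev_succZ (hx.trans (Vlev_mono h₁)), mem_Vlev_succZ (hy.trans (Vlev_mono h₂))⟩

theorem insert_mem_Vlev (hδ : IsLimitOrd δ) (hx : x ∈ Vlev δ) (hy : y ∈ Vlev δ) :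
    ({x, y} : ZFSet) ∈ Vlev δ := by
  obtain ⟨β, hβ, -, hx, hy⟩ := hδ.exists_mem_Vlev hx hy
  refine mem_Vlev.2 ⟨β, hβ, fun z hz => ?_⟩
  rcases ZFSet.mem_pair.1 hz with rfl | rfl
  exacts [hx, hy]

theorem pair_mem_Vlev (hδ : IsLimitOrd δ) (hx : x ∈ Vlev δ) (hy : y ∈ Vlev δ) :
    ZFSet.pair x y ∈ Vlev δ := by
  have hsx : ({x} : ZFSet) ∈ Vlev δ := by simpa using hδ.insert_mem_Vlev hx hx
  exact hδ.insert_mem_Vlev hsx (hδ.insert_mem_Vlev hx hy)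

theorem powerset_mem_Vlev (hδ : IsLimitOrd δ) (hx : x ∈ Vlev δ) :
    ZFSet.powerset x ∈ Vlev δ := by
  obtain ⟨α, hα, hx⟩ := mem_Vlev.1 hx
  exact mem_Vlev.2 ⟨succZ α, hδ.2 α hα, fun z hz =>
    mem_Vlev_succZ ((ZFSet.mem_powerset.1 hz).trans hx)⟩

end IsLimitOrd

/-- First-order formulas of set theory with variables as de Bruijn levels: a quantifier at depth
`n` binds variable `n`, and `ball i p`, `bex i p` are `∀ xₙ ∈ xᵢ, p` and `∃ xₙ ∈ xᵢ, p`. -/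
inductive SetFormula : Type
  | mem (i j : ℕ)
  | eq (i j : ℕ)
  | imp (p q : SetFormula)
  | and (p q : SetFormula)
  | or (p q : SetFormula)
  | all (p : SetFormula)
  | ex (p : SetFormula)
  | ball (i : ℕ) (p : SetFormula)
  | bex (i : ℕ) (p : SetFormula)

namespace SetFormula

open Function

variable {S : Type*}

def eval (E : S → S → Prop) : SetFormula → ℕ → (ℕ → S) → Prop
  | mem i j, _, v => E (v i) (v j)
  | eq i j, _, v => v i = v j
  | imp p q, n, v => p.eval E n v → q.eval E n v
  | and p q, n, v => p.eval E n v ∧ q.eval E n v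
  | or p q, n, v => p.eval E n v ∨ q.eval E n v
  | all p, n, v => ∀ a, p.eval E (n + 1) (update v n a)
  | ex p, n, v => ∃ a, p.eval E (n + 1) (update v n a)
  | ball i p, n, v => ∀ a, E a (v i) → p.eval E (n + 1) (update v n a)
  | bex i p, n, v => ∃ a, E a (v i) ∧ p.eval E (n + 1) (update v n a)

/-- All variables of `p`, placed at depth `n`, are bound or below `n`. -/
def IsScoped : SetFormula → ℕ → Prop
  | mem i j, n | eq i j, n => i < n ∧ j < n
  | imp p q, n | and p q, n | or p q, n => p.IsScoped n ∧ q.IsScoped n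
  | all p, n | ex p, n => p.IsScoped (n + 1)
  | ball i p, n | bex i p, n => i < n ∧ p.IsScoped (n + 1)

def IsBounded : SetFormula → Prop
  | mem _ _ | eq _ _ => True
  | imp p q | and p q | or p q => p.IsBounded ∧ q.IsBounded
  | all _ | ex _ => False
  | ball _ p | bex _ p => p.IsBounded

def structMem (S : Type*) [ZFLang.Structure S] (a b : S) : Prop :=
  Language.Structure.RelMap (L := ZFLang) memRel.mem ![a, b]

def memAtom (n i j : ℕ) : ZFLang.BoundedFormula Empty n :=
  if h : i < n ∧ j < n then
    Language.Relations.boundedFormula₂ (memRel.mem : ZFLang.Relations 2) (&⟨i, h.1⟩) (&⟨j, h.2⟩)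
  else ⊥

def compile : SetFormula → (n : ℕ) → ZFLang.BoundedFormula Empty n
  | mem i j, n => memAtom n i j
  | eq i j, n => if h : i < n ∧ j < n then (&⟨i, h.1⟩).bdEqual (&⟨j, h.2⟩) else ⊥
  | imp p q, n => (p.compile n).imp (q.compile n)
  | and p q, n => p.compile n ⊓ q.compile n
  | or p q, n => p.compile n ⊔ q.compile n
  | all p, n => (p.compile (n + 1)).all
  | ex p, n => (p.compile (n + 1)).ex
  | ball i p, n => ((memAtom (n + 1) n i).imp (p.compile (n + 1))).all
  | bex i p, n => (memAtom (n + 1) n i ⊓ p.compile (n + 1)).ex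

section Realize

variable {n : ℕ} {xs : Fin n → S} {v : ℕ → S}

theorem update_eq_snoc (hv : ∀ k (h : k < n), v k = xs ⟨k, h⟩) (a : S) :
    ∀ k (h : k < n + 1), update v n a k = Fin.snoc (α := fun _ => S) xs a ⟨k, h⟩ := by
  intro k hk
  rcases Nat.lt_or_ge k n with h | h
  · rw [update_of_ne h.ne, hv k h]
    exact (Fin.snoc_castSucc (α := fun _ => S) a xs ⟨k, h⟩).symm
  · obtain rfl : k = n := by omega
    rw [update_self]
    exact (Fin.snoc_last (α := fun _ => S) a xs).symm

variable [ZFLang.Structure S]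

theorem realize_memAtom {i j : ℕ} (hi : i < n) (hj : j < n)
    (hv : ∀ k (h : k < n), v k = xs ⟨k, h⟩) :
    (memAtom n i j).Realize Empty.elim xs ↔ structMem S (v i) (v j) := by
  rw [memAtom, dif_pos ⟨hi, hj⟩, hv i hi, hv j hj]
  exact Language.BoundedFormula.realize_rel₂

theorem realize_compile :
    ∀ (p : SetFormula) {n : ℕ} {xs : Fin n → S} {v : ℕ → S}, p.IsScoped n →
      (∀ k (h : k < n), v k = xs ⟨k, h⟩) →
      ((p.compile n).Realize Empty.elim xs ↔ p.eval (structMem S) n v)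
  | mem i j, _, _, _, ⟨hi, hj⟩, hv => by
    rw [compile, realize_memAtom hi hj hv, eval]
  | eq i j, _, _, _, ⟨hi, hj⟩, hv => by
    rw [compile, dif_pos ⟨hi, hj⟩, Language.BoundedFormula.realize_bdEqual, eval, hv i hi,
      hv j hj]
    rfl
  | imp p q, _, _, _, ⟨hp, hq⟩, hv => by
    rw [compile, Language.BoundedFormula.realize_imp, eval, realize_compile p hp hv,
      realize_compile q hq hv]
  | and p q, _, _, _, ⟨hp, hq⟩, hv => by
    rw [compile, Language.BoundedFormula.realize_inf, eval, realize_compile p hp hv,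
      realize_compile q hq hv]
  | or p q, _, _, _, ⟨hp, hq⟩, hv => by
    rw [compile, Language.BoundedFormula.realize_sup, eval, realize_compile p hp hv,
      realize_compile q hq hv]
  | all p, _, _, _, hp, hv => by
    rw [compile, Language.BoundedFormula.realize_all, eval]
    exact forall_congr' fun a => realize_compile p hp (update_eq_snoc hv a)
  | ex p, _, _, _, hp, hv => by
    rw [compile, Language.BoundedFormula.realize_ex, eval]
    exact exists_congr fun a => realize_compile p hp (update_eq_snoc hv a)
  | ball i p, n, xs, v, ⟨hi, hp⟩, hv => by
    rw [compile, Language.BoundedFormula.realize_all, eval]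
    refine forall_congr' fun a => ?_
    rw [Language.BoundedFormula.realize_imp, realize_memAtom (by omega) (by omega)
      (update_eq_snoc hv a), realize_compile p hp (update_eq_snoc hv a), update_self,
      update_of_ne hi.ne]
  | bex i p, n, xs, v, ⟨hi, hp⟩, hv => by
    rw [compile, Language.BoundedFormula.realize_ex, eval]
    refine exists_congr fun a => ?_
    rw [Language.BoundedFormula.realize_inf, realize_memAtom (by omega) (by omega)
      (update_eq_snoc hv a), realize_compile p hp (update_eq_snoc hv a), update_self,
      update_of_ne hi.ne]

end Realize

def toFormula (p : SetFormula) (n : ℕ) : ZFLang.Formula (Fin n) :=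
  (p.compile n).toFormula.relabel (Sum.elim Empty.elim id)

theorem realize_toFormula {S : Type*} [ZFLang.Structure S] {p : SetFormula} {n : ℕ}
    (hp : p.IsScoped n) (v : ℕ → S) :
    (p.toFormula n).Realize (fun i => v i) ↔ p.eval (structMem S) n v := by
  rw [toFormula, Language.Formula.realize_relabel, Language.BoundedFormula.realize_toFormula,
    ← realize_compile p hp (xs := fun i => v i) fun _ _ => rfl]
  exact Iff.of_eq (congrArg₂ _ (funext fun e => e.elim) rfl)

theorem eval_subtype_iff {M : Set ZFSet} (hM : ClassTransitive M) :
    ∀ {p : SetFormula}, p.IsBounded → ∀ (n : ℕ) (v : ℕ → M),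
      p.eval (structMem M) n v ↔ p.eval (· ∈ ·) n (Subtype.val ∘ v)
  | mem _ _, _, _, _ => Iff.rfl
  | eq _ _, _, _, _ => Subtype.ext_iff
  | imp _ _, ⟨hp, hq⟩, n, v =>
    imp_congr (eval_subtype_iff hM hp n v) (eval_subtype_iff hM hq n v)
  | and _ _, ⟨hp, hq⟩, n, v =>
    and_congr (eval_subtype_iff hM hp n v) (eval_subtype_iff hM hq n v)
  | or _ _, ⟨hp, hq⟩, n, v =>
    or_congr (eval_subtype_iff hM hp n v) (eval_subtype_iff hM hq n v)
  | ball i p, hp, n, v => by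
    have IH a := comp_update Subtype.val v n a ▸
      eval_subtype_iff hM (p := p) hp (n + 1) (update v n a)
    exact ⟨fun h a ha => (IH ⟨a, hM _ (v i).2 a ha⟩).1 (h _ ha), fun h a ha => (IH a).2 (h a ha)⟩
  | bex i p, hp, n, v => by
    have IH a := comp_update Subtype.val v n a ▸
      eval_subtype_iff hM (p := p) hp (n + 1) (update v n a)
    exact ⟨fun ⟨a, ha, h⟩ => ⟨a, ha, (IH a).1 h⟩,
      fun ⟨a, ha, h⟩ => ⟨⟨a, hM _ (v i).2 a ha⟩, ha, (IH _).2 h⟩⟩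

end SetFormula

namespace Sem

variable {S : Type*} (E : S → S → Prop)

def IsPair (p x y : S) : Prop :=
  ∃ u, E u p ∧ ∃ w, E w p ∧ (E x u ∧ ∀ t, E t u → t = x) ∧
    (E x w ∧ E y w ∧ ∀ t, E t w → t = x ∨ t = y) ∧ ∀ z, E z p → z = u ∨ z = w

def PairMem (s x y : S) : Prop := ∃ p, E p s ∧ IsPair E p x y

def IsGraph (g e : S) : Prop := ∀ z, E z e → ∃ x, E x g ∧ ∃ y, E y g ∧ IsPair E z x y

def IsOrd (x : S) : Prop := ∀ y, E y x → ∀ z, E z y → E z x ∧ ∀ w, E w z → E w y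

/-- `h` is (the graph of) a homomorphism from `(g, e)` to `(g', e')`. -/
def IsHom (h g e g' e' : S) : Prop :=
  (∀ x, E x g → ∃ y, E y g' ∧ PairMem E h x y) ∧
  ∀ x, E x g → ∀ x', E x' g → ∀ y, E y g' → ∀ y', E y' g' →
    PairMem E h x y → PairMem E h x' y' → PairMem E e x x' → PairMem E e' y y'

/-- Among the codes `⟨a, ⟨g, e⟩⟩` in `c`, each graph maps homomorphically to the graphs with
smaller or equal index. -/
def HasBackHoms (c : S) : Prop :=
  ∀ p, E p c → ∀ q, E q c → ∀ a w g e b w' g' e', IsPair E p a w → IsPair E w g e →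
    IsPair E q b w' → IsPair E w' g' e' → (E a b ∨ a = b) → ∃ h, IsHom E h g' e' g e

end Sem

namespace SetFormula

open Function

def isPair (n p x y : ℕ) : SetFormula :=
  bex p (bex p (and (and (mem x n) (ball n (eq (n + 2) x)))
    (and (and (mem x (n + 1)) (and (mem y (n + 1)) (ball (n + 1) (or (eq (n + 2) x)
      (eq (n + 2) y))))) (ball p (or (eq (n + 2) n) (eq (n + 2) (n + 1)))))))

def pairMem (n s x y : ℕ) : SetFormula := bex s (isPair (n + 1) n x y)

def isGraph (n g e : ℕ) : SetFormula := ball e (bex g (bex g (isPair (n + 3) n (n + 1) (n + 2))))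

def isOrd (n x : ℕ) : SetFormula :=
  ball x (ball n (and (mem (n + 1) x) (ball (n + 1) (mem (n + 2) n))))

def isHom (n h g e g' e' : ℕ) : SetFormula :=
  and (ball g (bex g' (pairMem (n + 2) h n (n + 1))))
    (ball g (ball g (ball g' (ball g' (imp (pairMem (n + 4) h n (n + 2))
      (imp (pairMem (n + 4) h (n + 1) (n + 3))
        (imp (pairMem (n + 4) e n (n + 1)) (pairMem (n + 4) e' (n + 2) (n + 3)))))))))

def hasBackHoms : SetFormula :=
  ball 0 (ball 0 (all (all (all (all (all (all (all (all
    (imp (isPair 11 1 3 4) (imp (isPair 11 4 5 6) (imp (isPair 11 2 7 8)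
      (imp (isPair 11 8 9 10) (imp (or (mem 3 7) (eq 3 7)) (ex (isHom 12 11 9 10 5 6))))))))))))))))

variable {S : Type*} {E : S → S → Prop} {n : ℕ}

theorem eval_isPair {p x y : ℕ} (hp : p < n) (hx : x < n) (hy : y < n) (v : ℕ → S) :
    (isPair n p x y).eval E n v ↔ Sem.IsPair E (v p) (v x) (v y) := by
  simp (disch := omega) only [isPair, eval, Sem.IsPair, update_self, update_of_ne]

theorem eval_pairMem {s x y : ℕ} (hx : x < n) (hy : y < n) (v : ℕ → S) :
    (pairMem n s x y).eval E n v ↔ Sem.PairMem E (v s) (v x) (v y) := by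
  simp (disch := omega) only [pairMem, eval, eval_isPair, Sem.PairMem, update_self, update_of_ne]

theorem eval_isGraph {g e : ℕ} (hg : g < n) (v : ℕ → S) :
    (isGraph n g e).eval E n v ↔ Sem.IsGraph E (v g) (v e) := by
  simp (disch := omega) only [isGraph, eval, eval_isPair, Sem.IsGraph, update_self, update_of_ne]

theorem eval_isOrd {x : ℕ} (hx : x < n) (v : ℕ → S) :
    (isOrd n x).eval E n v ↔ Sem.IsOrd E (v x) := by
  simp (disch := omega) only [isOrd, eval, Sem.IsOrd, update_self, update_of_ne]

theorem eval_isHom {h g e g' e' : ℕ} (hh : h < n) (hg : g < n) (he : e < n) (hg' : g' < n)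
    (he' : e' < n) (v : ℕ → S) :
    (isHom n h g e g' e').eval E n v ↔ Sem.IsHom E (v h) (v g) (v e) (v g') (v e') := by
  simp (disch := omega) only [isHom, eval, eval_pairMem, Sem.IsHom, update_self, update_of_ne]

theorem eval_hasBackHoms (v : ℕ → S) : hasBackHoms.eval E 1 v ↔ Sem.HasBackHoms E (v 0) := by
  simp (disch := omega) only [hasBackHoms, eval, eval_isPair, eval_isHom, Sem.HasBackHoms,
    update_self, update_of_ne]

theorem isScoped_isPair {p x y : ℕ} (hp : p < n) (hx : x < n) (hy : y < n) :
    (isPair n p x y).IsScoped n := by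
  simp only [isPair, IsScoped]
  omega

theorem isScoped_isGraph {g e : ℕ} (hg : g < n) (he : e < n) : (isGraph n g e).IsScoped n := by
  simp only [isGraph, isPair, IsScoped]
  omega

theorem isScoped_isOrd {x : ℕ} (hx : x < n) : (isOrd n x).IsScoped n := by
  simp only [isOrd, IsScoped]
  omega

theorem isScoped_hasBackHoms : hasBackHoms.IsScoped 1 := by
  simp [hasBackHoms, isHom, pairMem, isPair, IsScoped]

theorem isBounded_isPair {p x y : ℕ} : (isPair n p x y).IsBounded := by
  simp [isPair, IsBounded]

theorem isBounded_isHom {h g e g' e' : ℕ} : (isHom n h g e g' e').IsBounded := by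
  simp [isHom, pairMem, isPair, IsBounded]

theorem isBounded_isGraph {g e : ℕ} : (isGraph n g e).IsBounded := by
  simp [isGraph, isPair, IsBounded]

theorem isBounded_isOrd {x : ℕ} : (isOrd n x).IsBounded := by
  simp [isOrd, IsBounded]

end SetFormula

namespace Sem

open ZFSet

theorem isPair_iff {p x y : ZFSet} : IsPair (· ∈ ·) p x y ↔ p = pair x y := by
  constructor
  · rintro ⟨u, hup, w, hwp, ⟨hxu, hu⟩, ⟨hxw, hyw, hw⟩, hp⟩
    have hu : u = {x} := ext fun t => by
      simpa using ⟨hu t, fun h : t = x => h ▸ hxu⟩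
    have hw : w = {x, y} := ext fun t => by
      simp only [mem_insert_iff, mem_singleton]
      exact ⟨hw t, by rintro (rfl | rfl) <;> assumption⟩
    subst hu hw
    ext t
    simp only [pair, mem_insert_iff, mem_singleton]
    exact ⟨hp t, by rintro (rfl | rfl) <;> assumption⟩
  · rintro rfl
    refine ⟨{x}, by simp [pair], {x, y}, by simp [pair], by simp, by simp, ?_⟩
    simp [pair]

theorem pairMem_iff {s x y : ZFSet} : PairMem (· ∈ ·) s x y ↔ pair x y ∈ s := by
  simp [PairMem, isPair_iff]

theorem isGraph_iff {g e : ZFSet} : IsGraph (· ∈ ·) g e ↔ WVP.IsGraph g e := by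
  simp only [IsGraph, isPair_iff]
  rfl

theorem isOrd_iff {x : ZFSet} : IsOrd (· ∈ ·) x ↔ WVP.IsOrd x :=
  ⟨fun h => ⟨fun y hy z hz => (h y hy z hz).1, fun y hy z hz w hw => (h y hy z hz).2 w hw⟩,
    fun h y hy z hz => ⟨h.1 y hy hz, fun _ hw => h.2 y hy z hz hw⟩⟩

theorem isHom_iff {h g e g' e' : ZFSet} :
    IsHom (· ∈ ·) h g e g' e' ↔ (∀ x ∈ g, ∃ y ∈ g', pair x y ∈ h) ∧
      ∀ x ∈ g, ∀ x' ∈ g, ∀ y ∈ g', ∀ y' ∈ g',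
        pair x y ∈ h → pair x' y' ∈ h → pair x x' ∈ e → pair y y' ∈ e' := by
  simp only [IsHom, pairMem_iff]

theorem hasBackHoms_iff {c : ZFSet} :
    HasBackHoms (· ∈ ·) c ↔ ∀ a g e b g' e', pair a (pair g e) ∈ c → pair b (pair g' e') ∈ c →
      (a ∈ b ∨ a = b) → ∃ h, IsHom (· ∈ ·) h g' e' g e := by
  constructor
  · intro H a g e b g' e' hp hq hab
    exact H _ hp _ hq a _ g e b _ g' e' (isPair_iff.2 rfl) (isPair_iff.2 rfl) (isPair_iff.2 rfl)
      (isPair_iff.2 rfl) hab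
  · intro H p hp q hq a w g e b w' g' e' h₁ h₂ h₃ h₄ hab
    rw [isPair_iff] at h₁ h₂ h₃ h₄
    subst h₁ h₂ h₃ h₄
    exact H a g e b g' e' hp hq hab

theorem HasBackHoms.mono {c c' : ZFSet} (h : HasBackHoms (· ∈ ·) c) (hc : c' ⊆ c) :
    HasBackHoms (· ∈ ·) c' :=
  hasBackHoms_iff.2 fun a g e b g' e' hp hq =>
    hasBackHoms_iff.1 h a g e b g' e' (hc hp) (hc hq)

end Sem

section Subtype

open SetFormula

variable {M : Set ZFSet} {x y : ZFSet}

theorem ClassTransitive.mem_of_pair_mem (hM : ClassTransitive M) (h : ZFSet.pair x y ∈ M) :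
    x ∈ M ∧ y ∈ M := by
  have hx : ({x} : ZFSet) ∈ M := hM _ h _ (by simp [ZFSet.pair])
  have hxy : ({x, y} : ZFSet) ∈ M := hM _ h _ (by simp [ZFSet.pair])
  exact ⟨hM _ hx _ (by simp), hM _ hxy _ (by simp)⟩

theorem Sem.isPair_subtype_iff (hM : ClassTransitive M) {p x y : M} :
    Sem.IsPair (structMem M) p x y ↔ Sem.IsPair (· ∈ ·) (p : ZFSet) x y := by
  have h := eval_subtype_iff hM (isBounded_isPair (n := 3) (p := 0) (x := 1) (y := 2)) 3
    fun k => [p, x, y].getD k p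
  rwa [eval_isPair (by omega) (by omega) (by omega),
    eval_isPair (by omega) (by omega) (by omega)] at h

theorem Sem.isHom_subtype_iff (hM : ClassTransitive M) {h g e g' e' : M} :
    Sem.IsHom (structMem M) h g e g' e' ↔ Sem.IsHom (· ∈ ·) (h : ZFSet) g e g' e' := by
  have H := eval_subtype_iff hM
    (isBounded_isHom (n := 5) (h := 0) (g := 1) (e := 2) (g' := 3) (e' := 4)) 5
    fun k => [h, g, e, g', e'].getD k h
  rwa [eval_isHom (by omega) (by omega) (by omega) (by omega) (by omega),
    eval_isHom (by omega) (by omega) (by omega) (by omega) (by omega)] at H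

/-- The universal quantifiers of `HasBackHoms` range over components of members of `c`, so
they may be restricted to a transitive class. -/
theorem Sem.hasBackHoms_of_subtype (hM : ClassTransitive M) {c : M}
    (H : Sem.HasBackHoms (structMem M) c) : Sem.HasBackHoms (· ∈ ·) (c : ZFSet) := by
  intro p hp q hq a w g e b w' g' e' h₁ h₂ h₃ h₄ hab
  have hpM := hM _ c.2 _ hp
  have hqM := hM _ c.2 _ hq
  obtain ⟨haM, hwM⟩ := hM.mem_of_pair_mem (Sem.isPair_iff.1 h₁ ▸ hpM)
  obtain ⟨hgM, heM⟩ := hM.mem_of_pair_mem (Sem.isPair_iff.1 h₂ ▸ hwM)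
  obtain ⟨hbM, hw'M⟩ := hM.mem_of_pair_mem (Sem.isPair_iff.1 h₃ ▸ hqM)
  obtain ⟨hg'M, he'M⟩ := hM.mem_of_pair_mem (Sem.isPair_iff.1 h₄ ▸ hw'M)
  obtain ⟨h, hh⟩ := H ⟨p, hpM⟩ hp ⟨q, hqM⟩ hq ⟨a, haM⟩ ⟨w, hwM⟩ ⟨g, hgM⟩ ⟨e, heM⟩ ⟨b, hbM⟩
    ⟨w', hw'M⟩ ⟨g', hg'M⟩ ⟨e', he'M⟩ ((Sem.isPair_subtype_iff hM).2 h₁)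
    ((Sem.isPair_subtype_iff hM).2 h₂) ((Sem.isPair_subtype_iff hM).2 h₃)
    ((Sem.isPair_subtype_iff hM).2 h₄) (hab.imp_right Subtype.ext)
  exact ⟨h, (Sem.isHom_subtype_iff hM).1 hh⟩

end Subtype

section Graphs

open ZFSet

theorem graphHom_trans {g₁ e₁ : ZFSet.{u_1}} {g₂ e₂ : ZFSet.{u_2}} {g₃ e₃ : ZFSet.{u_3}}
    (h₁ : GraphHom g₁ e₁ g₂ e₂) (h₂ : GraphHom g₂ e₂ g₃ e₃) : GraphHom g₁ e₁ g₃ e₃ :=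
  let ⟨f₁, hf₁, he₁⟩ := h₁
  let ⟨f₂, hf₂, he₂⟩ := h₂
  ⟨f₂ ∘ f₁, fun x hx => hf₂ _ (hf₁ x hx), fun x y h => he₂ _ _ (he₁ x y h)⟩

theorem IsGraph.mem_of_pair_mem {g e x y : ZFSet} (he : IsGraph g e) (h : pair x y ∈ e) :
    x ∈ g ∧ y ∈ g := by
  obtain ⟨x', hx', y', hy', hxy⟩ := he _ h
  obtain ⟨rfl, rfl⟩ := pair_injective hxy
  exact ⟨hx', hy'⟩

theorem pair_mem_powerset_powerset {s x y : ZFSet} (hx : x ∈ s) (hy : y ∈ s) :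
    pair x y ∈ powerset (powerset s) := by
  refine mem_powerset.2 fun t ht => mem_powerset.2 fun z hz => ?_
  simp only [pair, mem_insert_iff, mem_singleton] at ht
  rcases ht with rfl | rfl <;> simp only [mem_insert_iff, mem_singleton] at hz <;>
    rcases hz with rfl | rfl <;> assumption

theorem IsGraph.subset_powerset_powerset {g e : ZFSet} (he : IsGraph g e) :
    e ⊆ powerset (powerset g) := fun z hz => by
  obtain ⟨x, hx, y, hy, rfl⟩ := he z hz
  exact pair_mem_powerset_powerset hx hy

theorem graphHom_of_isHom {h g e g' e' : ZFSet} (he : IsGraph g e)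
    (hh : Sem.IsHom (· ∈ ·) h g e g' e') : GraphHom g e g' e' := by
  obtain ⟨htot, hedge⟩ := Sem.isHom_iff.1 hh
  choose! f hfg hfh using htot
  refine ⟨f, hfg, fun x y hxy => ?_⟩
  obtain ⟨hx, hy⟩ := he.mem_of_pair_mem hxy
  exact hedge x hx y hy _ (hfg x hx) _ (hfg y hy) (hfh x hx) (hfh y hy) hxy

theorem exists_isHom_of_graphHom {g e g' e' : ZFSet} (hf : GraphHom g e g' e') :
    ∃ h, Sem.IsHom (· ∈ ·) h g e g' e' := by
  obtain ⟨f, hfg, hfe⟩ := hf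
  refine ⟨image (fun x => pair x (f x)) g, Sem.isHom_iff.2 ⟨fun x hx => ⟨f x, hfg x hx, ?_⟩, ?_⟩⟩
  · exact mem_image.2 ⟨x, hx, rfl⟩
  · intro x _ x' _ y _ y' _ hxy hxy' hxx'
    obtain ⟨_, -, hx⟩ := mem_image.1 hxy
    obtain ⟨_, -, hx'⟩ := mem_image.1 hxy'
    obtain ⟨rfl, rfl⟩ := pair_injective hx
    obtain ⟨rfl, rfl⟩ := pair_injective hx'
    exact hfe _ _ hxx'

theorem exists_copy {g e : ZFSet.{u_1}} {γ : ZFSet.{u_2}} (he : IsGraph g e)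
    {f : ZFSet.{u_1} → ZFSet.{u_2}} (hf : ∀ x ∈ g, f x ∈ γ)
    (hinj : ∀ x ∈ g, ∀ y ∈ g, f x = f y → x = y) :
    ∃ g' e', g' ⊆ γ ∧ IsGraph g' e' ∧ GraphHom g e g' e' ∧ GraphHom g' e' g e := by
  set g' := ZFSet.sep (fun y => ∃ x ∈ g, f x = y) γ
  set e' := ZFSet.sep (fun z => ∃ x y, pair x y ∈ e ∧ z = pair (f x) (f y)) (powerset (powerset γ))
  have hg' : ∀ x ∈ g, f x ∈ g' := fun x hx => mem_sep.2 ⟨hf x hx, x, hx, rfl⟩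
  have he' : ∀ x y, pair x y ∈ e → pair (f x) (f y) ∈ e' := fun x y hxy =>
    have ⟨hx, hy⟩ := he.mem_of_pair_mem hxy
    mem_sep.2 ⟨pair_mem_powerset_powerset (hf x hx) (hf y hy), x, y, hxy, rfl⟩
  have hinj' : Set.InjOn f {x | x ∈ g} := fun x hx y hy => hinj x hx y hy
  refine ⟨g', e', fun _ hy => (mem_sep.1 hy).1, fun z hz => ?_, ⟨f, hg', he'⟩,
    ⟨Function.invFunOn f {x | x ∈ g}, fun y hy => ?_, fun u w huw => ?_⟩⟩
  · obtain ⟨x, y, hxy, rfl⟩ := (mem_sep.1 hz).2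
    obtain ⟨hx, hy⟩ := he.mem_of_pair_mem hxy
    exact ⟨f x, hg' x hx, f y, hg' y hy, rfl⟩
  · obtain ⟨x, hx, rfl⟩ := (mem_sep.1 hy).2
    rwa [hinj'.leftInvOn_invFunOn hx]
  · obtain ⟨x, y, hxy, hfxy⟩ := (mem_sep.1 huw).2
    obtain ⟨hx, hy⟩ := he.mem_of_pair_mem hxy
    obtain ⟨rfl, rfl⟩ := pair_injective hfxy
    rwa [hinj'.leftInvOn_invFunOn hx, hinj'.leftInvOn_invFunOn hy]

end Graphs

namespace Elementary

open SetFormula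

variable {M : Set ZFSet} {j : ZFSet → ZFSet}

theorem eval_iff (hj : Elementary M j)
    {p : SetFormula} {n : ℕ} (hp : p.IsScoped n) (v : ℕ → ZFSet) :
    p.eval (· ∈ ·) n v ↔ p.eval (structMem M) n fun k => ⟨j (v k), hj.1 (v k)⟩ :=
  (realize_toFormula hp v).symm.trans
    ((hj.2 n _ _).trans (realize_toFormula hp fun k => (⟨j (v k), hj.1 (v k)⟩ : M)))

theorem eval_of_isBounded (hM : ClassTransitive M) (hj : Elementary M j) {p : SetFormula}
    {n : ℕ} (hb : p.IsBounded) (hp : p.IsScoped n) {v : ℕ → ZFSet} (h : p.eval (· ∈ ·) n v) :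
    p.eval (· ∈ ·) n (j ∘ v) :=
  (eval_subtype_iff hM hb n _).1 ((hj.eval_iff hp v).1 h)

theorem mem_map (hj : Elementary M j) {x y : ZFSet} (h : x ∈ y) : j x ∈ j y :=
  (hj.eval_iff (p := .mem 0 1) (n := 2) ⟨by omega, by omega⟩ fun k => [x, y].getD k x).1 h

theorem map_pair (hM : ClassTransitive M) (hj : Elementary M j) (x y : ZFSet) :
    j (ZFSet.pair x y) = ZFSet.pair (j x) (j y) := by
  have h : (isPair 3 0 1 2).eval (· ∈ ·) 3 fun k => [ZFSet.pair x y, x, y].getD k x :=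
    (eval_isPair (by omega) (by omega) (by omega) _).2 (Sem.isPair_iff.2 rfl)
  have h' := hj.eval_of_isBounded hM isBounded_isPair
    (isScoped_isPair (by omega) (by omega) (by omega)) h
  exact Sem.isPair_iff.1 ((eval_isPair (by omega) (by omega) (by omega) _).1 h')

theorem isOrdinal_map (hM : ClassTransitive M) (hj : Elementary M j) {κ : ZFSet}
    (hκ : κ.IsOrdinal) : (j κ).IsOrdinal := by
  have h : (isOrd 1 0).eval (· ∈ ·) 1 fun _ => κ :=
    (eval_isOrd (by omega) _).2 (Sem.isOrd_iff.2 (isOrd_iff_isOrdinal.2 hκ))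
  have h' := hj.eval_of_isBounded hM isBounded_isOrd (isScoped_isOrd (by omega)) h
  exact isOrd_iff_isOrdinal.1 (Sem.isOrd_iff.1 ((eval_isOrd (by omega) _).1 h'))

theorem isGraph_map (hM : ClassTransitive M) (hj : Elementary M j) {g e : ZFSet}
    (he : IsGraph g e) : IsGraph (j g) (j e) := by
  have h : (isGraph 2 0 1).eval (· ∈ ·) 2 fun k => [g, e].getD k g :=
    (eval_isGraph (by omega) _).2 (Sem.isGraph_iff.2 he)
  have h' := hj.eval_of_isBounded hM isBounded_isGraph
    (isScoped_isGraph (by omega) (by omega)) h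
  exact Sem.isGraph_iff.1 ((eval_isGraph (by omega) _).1 h')

theorem hasBackHoms_map (hM : ClassTransitive M) (hj : Elementary M j) {c : ZFSet}
    (hc : Sem.HasBackHoms (· ∈ ·) c) : Sem.HasBackHoms (· ∈ ·) (j c) := by
  have h := (hj.eval_iff isScoped_hasBackHoms fun _ => c).1 ((eval_hasBackHoms _).2 hc)
  exact Sem.hasBackHoms_of_subtype hM ((eval_hasBackHoms _).1 h)

theorem graphHom_map (hM : ClassTransitive M) (hj : Elementary M j) (g e : ZFSet) :
    GraphHom g e (j g) (j e) :=
  ⟨j, fun _ => hj.mem_map, fun x y h => hj.map_pair hM x y ▸ hj.mem_map h⟩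

theorem mem_map_self (hM : ClassTransitive M) (hj : Elementary M j) {κ : ZFSet}
    (hκ : κ.IsOrdinal) (hjκ : j κ ≠ κ) (hfix : ∀ α, IsOrd α → α ∈ κ → j α = α) : κ ∈ j κ := by
  have hjκ' := hj.isOrdinal_map hM hκ
  rcases hjκ'.mem_trichotomous hκ with h | h | h
  · have := hj.mem_map h
    rw [hfix _ (isOrd_iff_isOrdinal.2 hjκ') h] at this
    exact absurd this (ZFSet.mem_irrefl _)
  · exact absurd h hjκ
  · exact h

theorem graphHom_of_hasBackHoms (hM : ClassTransitive M) (hj : Elementary M j)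
    {c κ g e b g' e' : ZFSet} (hc : Sem.HasBackHoms (· ∈ ·) c)
    (hκ : ZFSet.pair κ (ZFSet.pair g e) ∈ c) (hb : ZFSet.pair b (ZFSet.pair g' e') ∈ j c)
    (hbκ : b ∈ j κ ∨ b = j κ) (he : IsGraph g e) : GraphHom (j g) (j e) g' e' := by
  have hjκ : ZFSet.pair (j κ) (ZFSet.pair (j g) (j e)) ∈ j c := by
    simpa only [hj.map_pair hM] using hj.mem_map hκ
  obtain ⟨h, hh⟩ := Sem.hasBackHoms_iff.1 (hj.hasBackHoms_map hM hc) _ _ _ _ _ _ hb hjκ hbκ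
  exact graphHom_of_isHom (hj.isGraph_map hM he) hh

end Elementary

theorem IsLimitOrd.code_mem_Vlev {δ α g e : ZFSet} (hδ : IsLimitOrd δ) (hα : α ∈ δ)
    (hg : g ∈ Vlev δ) (he : IsGraph g e) : ZFSet.pair α (ZFSet.pair g e) ∈ Vlev δ :=
  hδ.pair_mem_Vlev (mem_Vlev_of_mem hδ.1 hα) <| hδ.pair_mem_Vlev hg <|
    mem_Vlev_of_subset (hδ.powerset_mem_Vlev (hδ.powerset_mem_Vlev hg))
      he.subset_powerset_powerset

theorem exists_small_copies {δ : ZFSet.{u_1}} (hδ : IsLimitOrd δ)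
    {gV gE : ZFSet.{u_1} → ZFSet.{u_2}} (hGraph : ∀ α ∈ δ, IsGraph (gV α) (gE α))
    (hSmall : ∀ α ∈ δ, SmallerThan (gV α) δ) :
    ∃ vv ee : ZFSet.{u_1} → ZFSet.{u_1}, ∀ α ∈ δ,
      ZFSet.pair α (ZFSet.pair (vv α) (ee α)) ∈ Vlev δ ∧ IsGraph (vv α) (ee α) ∧
        GraphHom (gV α) (gE α) (vv α) (ee α) ∧ GraphHom (vv α) (ee α) (gV α) (gE α) := by
  have h : ∀ α, ∃ g e, α ∈ δ → ZFSet.pair α (ZFSet.pair g e) ∈ Vlev δ ∧ IsGraph g e ∧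
      GraphHom (gV α) (gE α) g e ∧ GraphHom g e (gV α) (gE α) := by
    intro α
    by_cases hα : α ∈ δ
    · obtain ⟨γ, hγ, f, hf, hinj⟩ := hSmall α hα
      obtain ⟨g, e, hgγ, he, hto, hfrom⟩ := exists_copy (hGraph α hα) hf hinj
      exact ⟨g, e, fun _ => ⟨hδ.code_mem_Vlev hα (mem_Vlev_of_subset
        (mem_Vlev_of_mem hδ.1 hγ) hgγ) he, he, hto, hfrom⟩⟩
    · exact ⟨∅, ∅, fun h => absurd h hα⟩
  choose vv ee hcopy using h
  exact ⟨vv, ee, hcopy⟩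

theorem hasBackHoms_image {δ : ZFSet.{u_1}} {gV gE : ZFSet.{u_1} → ZFSet.{u_2}}
    {vv ee : ZFSet.{u_1} → ZFSet.{u_1}}
    (hBack : ∀ α ∈ δ, ∀ α' ∈ δ, (α ∈ α' ∨ α = α') → GraphHom (gV α') (gE α') (gV α) (gE α))
    (hto : ∀ α ∈ δ, GraphHom (gV α) (gE α) (vv α) (ee α))
    (hfrom : ∀ α ∈ δ, GraphHom (vv α) (ee α) (gV α) (gE α)) :
    Sem.HasBackHoms (· ∈ ·) (ZFSet.image (fun α => ZFSet.pair α (ZFSet.pair (vv α) (ee α))) δ) := by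
  refine Sem.hasBackHoms_iff.2 fun a g e b g' e' ha hb hab => ?_
  obtain ⟨α, hα, hαa⟩ := ZFSet.mem_image.1 ha
  obtain ⟨rfl, hge⟩ := ZFSet.pair_injective hαa
  obtain ⟨rfl, rfl⟩ := ZFSet.pair_injective hge
  obtain ⟨α', hα', hα'b⟩ := ZFSet.mem_image.1 hb
  obtain ⟨rfl, hge'⟩ := ZFSet.pair_injective hα'b
  obtain ⟨rfl, rfl⟩ := ZFSet.pair_injective hge'
  exact exists_isHom_of_graphHom <|
    graphHom_trans (hfrom _ hα') (graphHom_trans (hBack _ hα _ hα' hab) (hto _ hα))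

/-- Let `δ` be an inaccessible cardinal which is Woodin (for every `C ⊆ V_δ` there
is `κ < δ` that is `β`-`C`-strong for all `β < δ`). Then for every sequence of
graphs `⟨G_α : α < δ⟩` with each `G_α` of cardinality less than `δ`, if for all
`α ≤ α' < δ` there is a graph homomorphism `G_{α'} → G_α`, then there exist `κ < δ`
and a graph homomorphism `G_κ → G_{κ+1}`. -/
theorem woodin_implies_swvp_below (δ : ZFSet) (hδ : Inacc δ)
    (hWoodin : ∀ C : ZFSet, C ⊆ Vlev δ →
      ∃ κ, IsOrd κ ∧ κ ∈ δ ∧ ∀ β, IsOrd β → β ∈ δ → BetaCStrong κ β C)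
    (gV gE : ZFSet → ZFSet)
    (hGraph : ∀ α ∈ δ, IsGraph (gV α) (gE α))
    (hSmall : ∀ α ∈ δ, SmallerThan (gV α) δ)
    (hBack : ∀ α ∈ δ, ∀ α' ∈ δ, (α ∈ α' ∨ α = α') →
      GraphHom (gV α') (gE α') (gV α) (gE α)) :
    ∃ κ ∈ δ, IsOrd κ ∧ GraphHom (gV κ) (gE κ) (gV (succZ κ)) (gE (succZ κ)) := by
  have hlim := hδ.isLimitOrd
  obtain ⟨vv, ee, hcopy⟩ := exists_small_copies hlim hGraph hSmall
  set C := ZFSet.image (fun α => ZFSet.pair α (ZFSet.pair (vv α) (ee α))) δ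
  have hC : ∀ α ∈ δ, ZFSet.pair α (ZFSet.pair (vv α) (ee α)) ∈ C :=
    fun α hα => ZFSet.mem_image.2 ⟨α, hα, rfl⟩
  have hCback : Sem.HasBackHoms (· ∈ ·) C :=
    hasBackHoms_image hBack (fun α hα => (hcopy α hα).2.2.1) fun α hα => (hcopy α hα).2.2.2
  obtain ⟨κ, hκ, hκδ, hstrong⟩ := hWoodin C fun z hz => by
    obtain ⟨α, hα, rfl⟩ := ZFSet.mem_image.1 hz
    exact (hcopy α hα).1
  have hκ1δ := hlim.2 κ hκδ
  obtain ⟨hκV, hκgraph, hκto, -⟩ := hcopy κ hκδ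
  obtain ⟨hκ1V, -, -, hκ1from⟩ := hcopy _ hκ1δ
  obtain ⟨β, hβδ, hβ, hκβ, hκ1β⟩ := hlim.exists_mem_Vlev hκV hκ1V
  obtain ⟨M, j, hM, hj, -, hjκ, hfix, -, hagree⟩ := hstrong β (isOrd_iff_isOrdinal.2 hβ) hβδ
  -- the code of `κ + 1` lies in `C ∩ V_β = j (C ∩ V_β) ∩ V_β`
  have hκ1 : ZFSet.pair (succZ κ) (ZFSet.pair (vv (succZ κ)) (ee (succZ κ))) ∈ j (C ∩ Vlev β) :=
    (ZFSet.mem_inter.1 (hagree ▸ ZFSet.mem_inter.2 ⟨hC _ hκ1δ, hκ1β⟩)).1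
  have hκ' := isOrd_iff_isOrdinal.1 hκ
  have hle : succZ κ ∈ j κ ∨ succZ κ = j κ :=
    succZ_mem_or_eq_of_mem (hj.isOrdinal_map hM hκ') (hj.mem_map_self hM hκ' hjκ hfix)
  have hhom : GraphHom (j (vv κ)) (j (ee κ)) (vv (succZ κ)) (ee (succZ κ)) :=
    hj.graphHom_of_hasBackHoms hM (hCback.mono fun _ h => (ZFSet.mem_inter.1 h).1)
      (ZFSet.mem_inter.2 ⟨hC κ hκδ, hκβ⟩) hκ1 hle hκgraph
  exact ⟨κ, hκδ, hκ, graphHom_trans hκto <| graphHom_trans (hj.graphHom_map hM _ _) <|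
    graphHom_trans hhom hκ1from⟩

end WVP
end

section
/- Let h : 𝒫_X → 𝒫_Y be a homomorphism of 𝒫-structures (in particular h preserves ⊆ and the well-foundedness predicate WF). Then the membership relation ∈* on the term model M* is well-founded: there is no sequence ⟨(k_n, b_n, f_n) : n ≥ 1⟩ in M* with (k_{n+1}, b_{n+1}, f_{n+1}) ∈* (k_n, b_n, f_n) for all n. -/
namespace WVP

/-- `tup X k`: the set of `k`-tuples (as lists) of elements of the ZF-set `X`. -/
def tup (X : ZFSet) (k : ℕ) : Set (List ZFSet) := {l | l.length = k ∧ ∀ z ∈ l, z ∈ X}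

/-- `finTup X`: the set of all finite tuples from `X`, i.e. `X^{<ω}`. -/
def finTup (X : ZFSet) : Set (List ZFSet) := {l | ∀ z ∈ l, z ∈ X}

/-- `WFset A`: `A` is well-founded under the reverse of the proper-initial-segment
relation, i.e. there is no infinite chain `a₁ ⊊ a₂ ⊊ ⋯` of elements of `A`. -/
def WFset (A : Set (List ZFSet)) : Prop :=
  ¬ ∃ g : ℕ → List ZFSet, (∀ n, g n ∈ A) ∧ ∀ n, g n <+: g (n + 1) ∧ g n ≠ g (n + 1)

/-- The coordinate projection `(x₁,…,x_k) ↦ (x_{i₁},…,x_{i_j})` (0-based indices). -/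
def proj (is : List ℕ) (l : List ZFSet) : List ZFSet := is.map fun i => l.getD i ∅

/-- The inverse image operator `Proj⁻¹_{k,(i₁,…,i_j)}` of the coordinate projection
`proj is : X^k → X^j`, mapping subsets of `X^j` to subsets of `X^k`. -/
def ProjInv (X : ZFSet) (k : ℕ) (is : List ℕ) (A : Set (List ZFSet)) : Set (List ZFSet) :=
  {l | l ∈ tup X k ∧ proj is l ∈ A}

/-- The bounded projection operator `BP_k` on subsets of `X^{k+1}`:
`BP_k(A) = {(x₁,…,x_{k+1}) ∈ X^{k+1} : ∃ z ∈ x_{k+1}, (x₁,…,x_k,z) ∈ A}`. -/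
def BP (X : ZFSet) (k : ℕ) (A : Set (List ZFSet)) : Set (List ZFSet) :=
  {l | l ∈ tup X (k + 1) ∧ ∃ z, z ∈ l.getLastD ∅ ∧ l.dropLast ++ [z] ∈ A}

/-- A homomorphism of 𝒫-structures `𝒫_X → 𝒫_Y`: a Boolean algebra homomorphism
`𝒫(X^{<ω}) → 𝒫(Y^{<ω})` sending `X^k` to `Y^k`, preserving the well-foundedness
predicate `WF` (forward direction), and commuting with the inverse-projection
operators `Proj⁻¹` and the bounded projection operators `BP_k`. -/
structure IsPHom (X Y : ZFSet) (h : Set (List ZFSet) → Set (List ZFSet)) : Prop where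
  subset_finTup : ∀ A ⊆ finTup X, h A ⊆ finTup Y
  map_inter : ∀ A ⊆ finTup X, ∀ B ⊆ finTup X, h (A ∩ B) = h A ∩ h B
  map_compl : ∀ A ⊆ finTup X, h (finTup X \ A) = finTup Y \ h A
  map_const : ∀ k, h (tup X k) = tup Y k
  map_wf : ∀ A ⊆ finTup X, WFset A → WFset (h A)
  map_projInv : ∀ (j k : ℕ) (is : List ℕ), is.length = j → (∀ i ∈ is, i < k) →
    ∀ A ⊆ tup X j, h (ProjInv X k is A) = ProjInv Y k is (h A)
  map_bp : ∀ (k : ℕ), ∀ A ⊆ tup X (k + 1), h (BP X k A) = BP Y k (h A)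

/-- The term model `M*`: triples `(k, b, f)` with `b ∈ Y^k` and `f : X^k → V`
(represented as a total function on tuples, only its values on `X^k` matter). -/
structure MStar (X Y : ZFSet) where
  k : ℕ
  b : List ZFSet
  hb : b ∈ tup Y k
  f : List ZFSet → ZFSet

/-- The membership relation `∈*` of the term model:
`(k₁,b₁,f₁) ∈* (k₂,b₂,f₂)` iff `b₁b₂ ∈ h({a₁a₂ : f₁(a₁) ∈ f₂(a₂)})`. -/
def memStar (X Y : ZFSet) (h : Set (List ZFSet) → Set (List ZFSet))
    (p q : MStar X Y) : Prop :=
  p.b ++ q.b ∈ h {l | ∃ a₁ ∈ tup X p.k, ∃ a₂ ∈ tup X q.k, l = a₁ ++ a₂ ∧ p.f a₁ ∈ q.f a₂}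

/-- The equality relation `=*` of the term model:
`(k₁,b₁,f₁) =* (k₂,b₂,f₂)` iff `b₁b₂ ∈ h({a₁a₂ : f₁(a₁) = f₂(a₂)})`. -/
def eqStar (X Y : ZFSet) (h : Set (List ZFSet) → Set (List ZFSet))
    (p q : MStar X Y) : Prop :=
  p.b ++ q.b ∈ h {l | ∃ a₁ ∈ tup X p.k, ∃ a₂ ∈ tup X q.k, l = a₁ ++ a₂ ∧ p.f a₁ = q.f a₂}

/-- "Łoś's theorem holds" for (the interpretations of) an `n`-ary formula, where `P`
is its interpretation in `V` and `Q` its interpretation in the term model `M*`: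
for all `(k₁,b₁,f₁),…,(kₙ,bₙ,fₙ)` in `M*`,
`M* ⊨ φ[(k₁,b₁,f₁),…,(kₙ,bₙ,fₙ)]` iff `b₁⋯bₙ ∈ h({a₁⋯aₙ : V ⊨ φ[f₁(a₁),…,fₙ(aₙ)]})`. -/
def LosHolds (X Y : ZFSet) (h : Set (List ZFSet) → Set (List ZFSet)) (n : ℕ)
    (P : (Fin n → ZFSet) → Prop) (Q : (Fin n → MStar X Y) → Prop) : Prop :=
  ∀ t : Fin n → MStar X Y,
    Q t ↔ (List.ofFn fun i => (t i).b).flatten ∈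
      h {l | ∃ a : Fin n → List ZFSet, (∀ i, a i ∈ tup X (t i).k) ∧
        l = (List.ofFn a).flatten ∧ P fun i => (t i).f (a i)}

/-!
Given an `∈*`-descending sequence `(kₙ, bₙ, fₙ)`, the Łoś argument (through `Proj⁻¹` and `∩`)
gives `b₀ ⋯ bₙ ∈ h(Cₙ)`, where `Cₙ` is the set of `a₀ ⋯ aₙ` with `f_{m+1}(a_{m+1}) ∈ f_m(a_m)`
for all `m < n`. The set `⋃ Cₙ` is well-founded, since an infinite chain in it would yield an
`∈`-descending sequence in `V`. If infinitely many `kₙ` are positive, the `b₀ ⋯ bₙ` contain an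
infinite chain in `h(⋃ Cₙ)`, contradicting preservation of `WF`. Otherwise `kₙ = 0` from some
point on, and then, as `h ∅ = ∅`, the relation `∈*` there is literally `fₙ₊₁([]) ∈ fₙ([])`.
-/

lemma tup_subset_finTup {X : ZFSet} {k : ℕ} : tup X k ⊆ finTup X := fun _ hl => hl.2

lemma append_mem_tup {X : ZFSet} {j k : ℕ} {l₁ l₂ : List ZFSet}
    (h₁ : l₁ ∈ tup X j) (h₂ : l₂ ∈ tup X k) : l₁ ++ l₂ ∈ tup X (j + k) :=
  ⟨by simp [h₁.1, h₂.1], fun z hz => (List.mem_append.1 hz).elim (h₁.2 z) (h₂.2 z)⟩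

lemma proj_append (is₁ is₂ : List ℕ) (l : List ZFSet) :
    proj (is₁ ++ is₂) l = proj is₁ l ++ proj is₂ l :=
  List.map_append

lemma length_proj (is : List ℕ) (l : List ZFSet) : (proj is l).length = is.length :=
  List.length_map _

lemma proj_range' {d j : ℕ} {l : List ZFSet} (hl : d + j ≤ l.length) :
    proj (List.range' d j) l = (l.drop d).take j := by
  apply List.ext_getElem
  · simp [length_proj]; omega
  · intro i hi _
    simp only [proj, List.getElem_map, List.getElem_range', List.getElem_take,
      List.getElem_drop]
    rw [List.getD_eq_getElem _ _ (by simp [length_proj] at hi; omega)]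
    simp

lemma proj_eq_of_isPrefix {is : List ℕ} {l₁ l₂ : List ZFSet} (hpre : l₁ <+: l₂)
    (his : ∀ i ∈ is, i < l₁.length) : proj is l₁ = proj is l₂ :=
  List.map_congr_left fun i hi => by
    rw [List.getD_eq_getElem _ _ (his i hi),
      List.getD_eq_getElem _ _ ((his i hi).trans_le hpre.length_le), hpre.getElem]

lemma not_wfSet_of_isPrefix_chain {A : Set (List ZFSet)} {c : ℕ → List ZFSet}
    (hA : ∀ n, c n ∈ A) (hc : ∀ m n, m ≤ n → c m <+: c n)
    (hunb : ∀ n, ∃ m, (c n).length < (c m).length) : ¬ WFset A := by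
  choose next hnext using hunb
  have hle : ∀ n, n ≤ next n := fun n => by
    by_contra! hlt
    exact (hnext n).not_ge (hc _ _ hlt.le).length_le
  refine not_not.2 ⟨fun n => c (next^[n] 0), fun n => hA _, fun n => ?_⟩
  show c _ <+: c (next^[n + 1] 0) ∧ c _ ≠ c (next^[n + 1] 0)
  rw [Function.iterate_succ_apply']
  exact ⟨hc _ _ (hle _), fun heq => (hnext _).ne (congrArg List.length heq)⟩

section TermModel

variable {X Y : ZFSet} {h : Set (List ZFSet) → Set (List ZFSet)}

namespace IsPHom

lemma map_empty (hh : IsPHom X Y h) : h ∅ = ∅ := by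
  have hinter := hh.map_inter (finTup X) subset_rfl (finTup X \ finTup X) Set.sdiff_subset
  rwa [Set.inter_sdiff_self, hh.map_compl _ subset_rfl, Set.inter_sdiff_self] at hinter

lemma mono (hh : IsPHom X Y h) {A B : Set (List ZFSet)} (hB : B ⊆ finTup X) (hAB : A ⊆ B) :
    h A ⊆ h B := by
  rw [← Set.inter_eq_left.2 hAB, hh.map_inter _ (hAB.trans hB) _ hB]
  exact Set.inter_subset_right

lemma mem_map_projInv (hh : IsPHom X Y h) {j k : ℕ} {is : List ℕ} (hlen : is.length = j)
    (his : ∀ i ∈ is, i < k) {A : Set (List ZFSet)} (hA : A ⊆ tup X j) {l : List ZFSet}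
    (hl : l ∈ tup Y k) : l ∈ h (ProjInv X k is A) ↔ proj is l ∈ h A := by
  rw [hh.map_projInv j k is hlen his A hA]
  exact and_iff_right hl

end IsPHom

def memSet (p q : MStar X Y) : Set (List ZFSet) :=
  {l | ∃ a₁ ∈ tup X p.k, ∃ a₂ ∈ tup X q.k, l = a₁ ++ a₂ ∧ p.f a₁ ∈ q.f a₂}

lemma memSet_subset (p q : MStar X Y) : memSet p q ⊆ tup X (p.k + q.k) := by
  rintro _ ⟨a₁, h₁, a₂, h₂, rfl, -⟩
  exact append_mem_tup h₁ h₂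

lemma f_mem_f_of_append_mem_memSet {p q : MStar X Y} {a₁ a₂ : List ZFSet}
    (h₁ : a₁.length = p.k) (hmem : a₁ ++ a₂ ∈ memSet p q) : p.f a₁ ∈ q.f a₂ := by
  obtain ⟨c₁, hc₁, c₂, -, heq, hfc⟩ := hmem
  obtain ⟨rfl, rfl⟩ := List.append_inj heq (h₁.trans hc₁.1.symm)
  exact hfc

lemma f_mem_f_of_memStar_of_k_eq_zero (hh : IsPHom X Y h) {p q : MStar X Y}
    (hp : p.k = 0) (hq : q.k = 0) (hpq : memStar X Y h p q) : p.f [] ∈ q.f [] := by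
  by_contra hnot
  have hempty : memSet p q = ∅ := by
    refine Set.eq_empty_iff_forall_notMem.2 ?_
    rintro _ ⟨a₁, h₁, a₂, h₂, rfl, hfa⟩
    rw [List.length_eq_zero_iff.1 (h₁.1.trans hp), List.length_eq_zero_iff.1 (h₂.1.trans hq)]
      at hfa
    exact hnot hfa
  change p.b ++ q.b ∈ h (memSet p q) at hpq
  rw [hempty, hh.map_empty] at hpq
  exact hpq

variable (g : ℕ → MStar X Y)

def offset (m : ℕ) : ℕ := ∑ i ∈ Finset.range m, (g i).k

lemma offset_succ (m : ℕ) : offset g (m + 1) = offset g m + (g m).k :=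
  Finset.sum_range_succ _ m

lemma offset_mono : Monotone (offset g) := fun _ _ hmn =>
  Finset.sum_le_sum_of_subset (Finset.range_subset_range.2 hmn)

/-- The coordinates of `b₀ ⋯ bₙ` occupied by `b_m`. -/
def block (m : ℕ) : List ℕ := List.range' (offset g m) (g m).k

lemma lt_offset_of_mem_block {m i : ℕ} (hi : i ∈ block g m) : i < offset g (m + 1) := by
  rw [block, List.mem_range'_1] at hi
  rw [offset_succ]
  exact hi.2

def concatB : ℕ → List ZFSet
  | 0 => (g 0).b
  | n + 1 => concatB n ++ (g (n + 1)).b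

lemma concatB_mem_tup : ∀ n, concatB g n ∈ tup Y (offset g (n + 1))
  | 0 => by simpa [offset, concatB] using (g 0).hb
  | n + 1 => by
      rw [offset_succ]
      exact append_mem_tup (concatB_mem_tup n) (g (n + 1)).hb

lemma length_concatB (n : ℕ) : (concatB g n).length = offset g (n + 1) :=
  (concatB_mem_tup g n).1

lemma concatB_isPrefix {m n : ℕ} (hmn : m ≤ n) : concatB g m <+: concatB g n := by
  induction n, hmn using Nat.le_induction with
  | base => exact List.prefix_refl _
  | succ n _ ih => exact ih.trans (List.prefix_append _ _)

lemma proj_block_concatB {m n : ℕ} (hmn : m ≤ n) : proj (block g m) (concatB g n) = (g m).b := by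
  rw [← proj_eq_of_isPrefix (concatB_isPrefix g hmn) fun i hi => by
    rw [length_concatB]; exact lt_offset_of_mem_block g hi]
  have hprev : ∃ l, l.length = offset g m ∧ concatB g m = l ++ (g m).b := by
    cases m with
    | zero => exact ⟨[], rfl, rfl⟩
    | succ m => exact ⟨concatB g m, length_concatB g m, rfl⟩
  obtain ⟨l, hl, heq⟩ := hprev
  rw [block, heq, proj_range' (by simp [hl, (g m).hb.1]), ← hl, List.drop_left,
    List.take_of_length_le (g m).hb.1.le]

/-- `chainSet g n` consists of the `a₀ ⋯ aₙ` with `f_{m+1}(a_{m+1}) ∈ f_m(a_m)` for all `m < n`. -/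
def chainSet : ℕ → Set (List ZFSet)
  | 0 => tup X (offset g 1)
  | n + 1 =>
      ProjInv X (offset g (n + 2)) (List.range' 0 (offset g (n + 1))) (chainSet n) ∩
      ProjInv X (offset g (n + 2)) (block g (n + 1) ++ block g n) (memSet (g (n + 1)) (g n))

lemma chainSet_subset : ∀ n, chainSet g n ⊆ tup X (offset g (n + 1))
  | 0 => subset_rfl
  | _ + 1 => fun _ hl => hl.1.1

lemma f_mem_f_of_mem_chainSet {n : ℕ} {l : List ZFSet} (hl : l ∈ chainSet g n) {m : ℕ}
    (hmn : m < n) : (g (m + 1)).f (proj (block g (m + 1)) l) ∈ (g m).f (proj (block g m) l) := by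
  induction n generalizing l with
  | zero => omega
  | succ n ih =>
    obtain ⟨⟨hltup, hinit⟩, -, hlast⟩ := hl
    rcases Nat.lt_succ_iff_lt_or_eq.1 hmn with hlt | rfl
    · have hoff : offset g (n + 1) ≤ offset g (n + 2) := offset_mono g (by omega)
      rw [proj_range' (by rw [hltup.1, zero_add]; exact hoff), List.drop_zero] at hinit
      have hlen : (l.take (offset g (n + 1))).length = offset g (n + 1) := by
        rw [List.length_take, hltup.1]; exact min_eq_left hoff
      have hpre := List.take_prefix (offset g (n + 1)) l
      have hblock : ∀ j ≤ n, ∀ i ∈ block g j, i < (l.take (offset g (n + 1))).length :=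
        fun j hj i hi => by
          rw [hlen]; exact (lt_offset_of_mem_block g hi).trans_le (offset_mono g (by omega))
      have hchain := ih hinit hlt
      rwa [proj_eq_of_isPrefix hpre (hblock (m + 1) hlt),
        proj_eq_of_isPrefix hpre (hblock m hlt.le)] at hchain
    · rw [proj_append] at hlast
      exact f_mem_f_of_append_mem_memSet (by simp [length_proj, block]) hlast

lemma concatB_mem_map_chainSet (hh : IsPHom X Y h) (hg : ∀ n, memStar X Y h (g (n + 1)) (g n))
    (n : ℕ) : concatB g n ∈ h (chainSet g n) := by
  induction n with
  | zero =>
    rw [chainSet, hh.map_const]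
    exact concatB_mem_tup g 0
  | succ n ih =>
    have hcc := concatB_mem_tup g (n + 1)
    have hoff : offset g (n + 1) ≤ offset g (n + 2) := offset_mono g (by omega)
    have hinit : ∀ i ∈ List.range' 0 (offset g (n + 1)), i < offset g (n + 2) := fun i hi =>
      ((List.mem_range'_1.1 hi).2.trans_le (by omega))
    have hlast : ∀ i ∈ block g (n + 1) ++ block g n, i < offset g (n + 2) := fun i hi =>
      (List.mem_append.1 hi).elim (lt_offset_of_mem_block g)
        fun hi => (lt_offset_of_mem_block g hi).trans_le hoff
    rw [chainSet, hh.map_inter _ (fun _ hl => hl.1.2) _ (fun _ hl => hl.1.2), Set.mem_inter_iff,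
      hh.mem_map_projInv List.length_range' hinit (chainSet_subset g n) hcc,
      hh.mem_map_projInv (by simp [block]) hlast (memSet_subset _ _) hcc]
    constructor
    · rwa [proj_range' (by rw [hcc.1, zero_add]; exact hoff), List.drop_zero, concatB,
        List.take_left' (length_concatB g n)]
    · rw [proj_append, proj_block_concatB g le_rfl, proj_block_concatB g (by omega)]
      exact hg n

lemma wfSet_iUnion_chainSet : WFset (⋃ n, chainSet g n) := by
  rintro ⟨d, hd, hchain⟩
  choose idx hidx using fun j => Set.mem_iUnion.1 (hd j)
  have hlen : ∀ j, (d j).length = offset g (idx j + 1) := fun j => (chainSet_subset g _ (hidx j)).1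
  have hidx_mono : StrictMono idx := strictMono_nat_of_lt_succ fun j => by
    have hlt : (d j).length < (d (j + 1)).length :=
      (hchain j).1.length_le.lt_of_ne fun heq => (hchain j).2 ((hchain j).1.eq_of_length heq)
    rw [hlen, hlen] at hlt
    exact Nat.succ_lt_succ_iff.1 ((offset_mono g).reflect_lt hlt)
  have hdesc : ∀ j, (g (j + 1)).f (proj (block g (j + 1)) (d (j + 1))) ∈
      (g j).f (proj (block g j) (d j)) := fun j => by
    rw [proj_eq_of_isPrefix (hchain j).1 fun i hi => by
      rw [hlen]; exact (lt_offset_of_mem_block g hi).trans_le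
        (offset_mono g (Nat.succ_le_succ (hidx_mono.le_apply (x := j))))]
    exact f_mem_f_of_mem_chainSet g (hidx (j + 1)) (hidx_mono.le_apply (x := j + 1))
  obtain ⟨j, hj⟩ := WellFounded.not_rel_apply_succ (r := (· ∈ ·))
    fun j => (g j).f (proj (block g j) (d j))
  exact hj (hdesc j)

lemma exists_length_concatB_lt (hk : ∀ N, ∃ n ≥ N, (g n).k ≠ 0) (n : ℕ) :
    ∃ m, (concatB g n).length < (concatB g m).length := by
  obtain ⟨m, hm, hkm⟩ := hk (n + 1)
  refine ⟨m, ?_⟩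
  rw [length_concatB, length_concatB, offset_succ g m]
  have := offset_mono g hm
  omega

end TermModel

/-- Let `h : 𝒫_X → 𝒫_Y` be a homomorphism of 𝒫-structures (in particular `h`
preserves `⊆` and the well-foundedness predicate `WF`). Then the membership relation
`∈*` of the term model `M*` is well-founded: there is no sequence
`⟨(kₙ, bₙ, fₙ) : n⟩` in `M*` with `(k_{n+1}, b_{n+1}, f_{n+1}) ∈* (kₙ, bₙ, fₙ)`
for all `n`. -/
theorem memStar_wellFounded (X Y : ZFSet) (h : Set (List ZFSet) → Set (List ZFSet))
    (hh : IsPHom X Y h) :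
    ¬ ∃ g : ℕ → MStar X Y, ∀ n, memStar X Y h (g (n + 1)) (g n) := by
  rintro ⟨g, hg⟩
  by_cases hfin : ∃ N, ∀ n ≥ N, (g n).k = 0
  · obtain ⟨N, hN⟩ := hfin
    obtain ⟨n, hn⟩ := WellFounded.not_rel_apply_succ (r := (· ∈ ·)) fun n => (g (N + n)).f []
    exact hn (f_mem_f_of_memStar_of_k_eq_zero hh (hN _ (by omega)) (hN _ (by omega)) (hg (N + n)))
  · push Not at hfin
    have hsub : (⋃ n, chainSet g n) ⊆ finTup X :=
      Set.iUnion_subset fun n => (chainSet_subset g n).trans tup_subset_finTup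
    exact not_wfSet_of_isPrefix_chain
      (fun n => hh.mono hsub (Set.subset_iUnion _ n) (concatB_mem_map_chainSet g hh hg n))
      (fun _ _ => concatB_isPrefix g) (exists_length_concatB_lt g hfin)
      (hh.map_wf _ hsub (wfSet_iUnion_chainSet g))

end WVP
end
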